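/- Let σ : X* → M be a choice of generators for a right cancellative monoid M. Then no two distinct vertices of the loop automaton Γ̂_σ(M) are equivalent: for distinct p, q ∈ M the cones (sets of words labelling paths to the identity/terminal vertex) of p and q differ. Consequently Γ̂_σ(M) is the minimal automaton of L_σ(M). -/

import Mathlib

open FreeMonoid

section LoopPrelude

variable {X M : Type*} [Monoid M]

def barW {X : Type*} (w : List (X ⊕ X)) : List (X ⊕ X) := (w.map Sum.swap).reverse

def posW {X : Type*} (u : List X) : List (X ⊕ X) := u.map Sum.inl

def negW {X : Type*} (v : List X) : List (X ⊕ X) := (v.map Sum.inr).reverse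

inductive LStep (σ : FreeMonoid X →* M) : M → (X ⊕ X) → M → Prop
  | posW (a : M) (x : X) : LStep σ a (Sum.inl x) (a * σ (of x))
  | negW (a : M) (x : X) : LStep σ (a * σ (of x)) (Sum.inr x) a

inductive LPath (σ : FreeMonoid X →* M) : M → List (X ⊕ X) → M → Prop
  | nil (a : M) : LPath σ a [] a
  | cons {a b c : M} {l : X ⊕ X} {w : List (X ⊕ X)}
      (h₁ : LStep σ a l b) (h₂ : LPath σ b w c) : LPath σ a (l :: w) c

def LoopProblem (σ : FreeMonoid X →* M) : Set (List (X ⊕ X)) := { w | LPath σ 1 w 1 }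

end LoopPrelude

section SemiPrelude

variable {X S : Type*} [Semigroup S]

def SLoopProblem (f : X → S) : Set (List (X ⊕ X)) :=
  LoopProblem (FreeMonoid.lift (fun x => (f x : WithOne S)))

end SemiPrelude

namespace LStep

variable {X M : Type*} [Monoid M] {σ : FreeMonoid X →* M} {a b : M} {x : X}

theorem inl_iff : LStep σ a (Sum.inl x) b ↔ b = a * σ (of x) := by
  constructor
  · rintro ⟨⟩
    rfl
  · rintro rfl
    exact .posW a x

theorem inr_iff : LStep σ a (Sum.inr x) b ↔ a = b * σ (of x) := by
  constructor
  · rintro ⟨⟩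
    rfl
  · rintro rfl
    exact .negW b x

theorem right_unique [IsRightCancelMul M] {p q r : M} {l : X ⊕ X}
    (hq : LStep σ p l q) (hr : LStep σ p l r) : q = r := by
  cases l with
  | inl x => rw [inl_iff] at hq hr; rw [hq, hr]
  | inr x => rw [inr_iff] at hq hr; exact mul_right_cancel (hq.symm.trans hr)

end LStep

namespace LPath

variable {X M : Type*} [Monoid M] {σ : FreeMonoid X →* M}

theorem nil_iff {a c : M} : LPath σ a [] c ↔ a = c := by
  constructor
  · rintro ⟨⟩
    rfl
  · rintro rfl
    exact .nil a

theorem cons_iff {a c : M} {l : X ⊕ X} {w : List (X ⊕ X)} :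
    LPath σ a (l :: w) c ↔ ∃ b, LStep σ a l b ∧ LPath σ b w c := by
  constructor
  · rintro ⟨⟩
    exact ⟨_, ‹_›, ‹_›⟩
  · rintro ⟨b, hl, hw⟩
    exact .cons hl hw

theorem append_iff {a c : M} {w w' : List (X ⊕ X)} :
    LPath σ a (w ++ w') c ↔ ∃ b, LPath σ a w b ∧ LPath σ b w' c := by
  induction w generalizing a with
  | nil => simp [nil_iff]
  | cons l t ih =>
    simp only [List.cons_append, cons_iff, ih]
    grind

theorem posW_iff (u : List X) {a b : M} :
    LPath σ a (posW u) b ↔ b = a * σ (ofList u) := by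
  induction u generalizing a with
  | nil => simp [posW, nil_iff, eq_comm]
  | cons x t ih =>
    have hposW : posW (x :: t) = Sum.inl x :: posW t := rfl
    simp only [hposW, cons_iff, LStep.inl_iff, ih, ofList_cons, map_mul, mul_assoc,
      exists_eq_left]

theorem negW_iff (u : List X) {a c : M} :
    LPath σ a (negW u) c ↔ a = c * σ (ofList u) := by
  induction u generalizing a c with
  | nil => simp [negW, nil_iff]
  | cons x t ih =>
    have hnegW : negW (x :: t) = negW t ++ [Sum.inr x] := by simp [negW]
    simp only [hnegW, append_iff, cons_iff, nil_iff, LStep.inr_iff, ih, ofList_cons,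
      map_mul, mul_assoc, exists_eq_right]

end LPath

theorem loop_automaton_minimal {X M : Type*} [Monoid M] [IsRightCancelMul M]
    (σ : FreeMonoid X →* M) (hσ : Function.Surjective σ) :
    (∀ p : M, (∃ w : List (X ⊕ X), LPath σ 1 w p) ∧ ∃ w : List (X ⊕ X), LPath σ p w 1) ∧
    (∀ (p : M) (a : X ⊕ X) (q r : M), LStep σ p a q → LStep σ p a r → q = r) ∧
    ∀ p q : M, {w : List (X ⊕ X) | LPath σ p w 1} = {w | LPath σ q w 1} → p = q := by
  refine ⟨fun p => ?_, fun p a q r => LStep.right_unique, fun p q hcone => ?_⟩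
  · obtain ⟨u, rfl⟩ := hσ p
    exact ⟨⟨posW u.toList, by simp [LPath.posW_iff]⟩, ⟨negW u.toList, by simp [LPath.negW_iff]⟩⟩
  · -- the cone of `σ u` is the only one containing the inverse word of `u`
    obtain ⟨u, rfl⟩ := hσ p
    have hp : negW u.toList ∈ {w | LPath σ (σ u) w 1} := by simp [LPath.negW_iff]
    rw [hcone, Set.mem_ofPred_eq, LPath.negW_iff] at hp
    simpa using hp.symm
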